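/- Let H be a complex Hilbert space, Ĥ = H ⊕ H, and J : Ĥ → Ĥ the operator J(x,y) = (y,−x). If L ⊆ Ĥ is a lagrangian subspace (i.e. JL = L⊥) and S : L → L is a bounded self-adjoint operator, then the graph of JS : L → L⊥, namely {v + JSv : v ∈ L}, is also a lagrangian subspace of Ĥ. -/
import Mathlib


open scoped InnerProductSpace

noncomputable section

variable (H : Type) [NormedAddCommGroup H] [InnerProductSpace ℂ H] [CompleteSpace H]

/-- `Ĥ = H ⊕ H` with the Hilbert (l²) structure. -/
abbrev Hh := WithLp 2 (H × H)

/-- The complex structure `J(x,y) = (y, -x)` on `Ĥ = H ⊕ H`. -/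
def hatJ : Hh H →L[ℂ] Hh H :=
  (WithLp.prodContinuousLinearEquiv 2 ℂ H H).symm.toContinuousLinearMap ∘L
    ((ContinuousLinearMap.snd ℂ H H).prod (-(ContinuousLinearMap.fst ℂ H H))) ∘L
    (WithLp.prodContinuousLinearEquiv 2 ℂ H H).toContinuousLinearMap

/-- A subspace `L ⊆ Ĥ` is lagrangian if `JL = L⊥`. -/
def IsLagrangian (L : Submodule ℂ (Hh H)) : Prop :=
  L.map (hatJ H).toLinearMap = Lᗮ

/-- The graph `{v + J(S v) : v ∈ L}` of `JS : L → L⊥`, as a submodule of `Ĥ`. -/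
def graphJS (L : Submodule ℂ (Hh H)) (S : ↥L →L[ℂ] ↥L) : Submodule ℂ (Hh H) :=
  LinearMap.range (L.subtype + ((hatJ H).toLinearMap.comp (L.subtype.comp S.toLinearMap)))

set_option linter.unusedSectionVars false

lemma hatJ_fst (x : Hh H) : (hatJ H x).fst = x.snd := rfl
lemma hatJ_snd (x : Hh H) : (hatJ H x).snd = -x.fst := rfl
lemma hatJ_hatJ (x : Hh H) : hatJ H (hatJ H x) = -x := by
  apply (WithLp.prodContinuousLinearEquiv 2 ℂ H H).injective
  ext <;> simp [hatJ_fst, hatJ_snd]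
lemma inner_hatJ_hatJ (x y : Hh H) : ⟪hatJ H x, hatJ H y⟫_ℂ = ⟪x, y⟫_ℂ := by
  simp [WithLp.prod_inner_apply, hatJ_fst, hatJ_snd, add_comm]
lemma inner_hatJ_left (x y : Hh H) : ⟪hatJ H x, y⟫_ℂ = -⟪x, hatJ H y⟫_ℂ := by
  have := inner_hatJ_hatJ H x (hatJ H y)
  rw [hatJ_hatJ, inner_neg_right] at this
  rw [← this, neg_neg]
lemma hatJ_injective : Function.Injective (hatJ H) := by
  intro x y h
  have := congrArg (hatJ H) h
  rw [hatJ_hatJ, hatJ_hatJ] at this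
  exact neg_injective this

lemma mem_graphJS (L : Submodule ℂ (Hh H)) (S : ↥L →L[ℂ] ↥L) (u : Hh H) :
    u ∈ graphJS H L S ↔ ∃ v : ↥L, (v : Hh H) + hatJ H (S v : Hh H) = u := by
  simp [graphJS, LinearMap.mem_range]

/-- if `L` is a lagrangian subspace of `Ĥ = H ⊕ H` and `S : L → L` is a
bounded self-adjoint operator, then the graph of `JS`, namely `{v + JSv : v ∈ L}`, is
also a lagrangian subspace of `Ĥ`. -/
theorem graph_of_JS_isLagrangian (L : Submodule ℂ (Hh H)) (hL : IsLagrangian H L)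
    (S : ↥L →L[ℂ] ↥L) (hS : ∀ x y : ↥L, ⟪S x, y⟫_ℂ = ⟪x, S y⟫_ℂ) :
    IsLagrangian H (graphJS H L S) := by
  -- key inner product facts relative to L
  have hJL : ∀ a b : Hh H, a ∈ L → b ∈ L → ⟪hatJ H a, b⟫_ℂ = 0 := by
    intro a b ha hb
    have hJa : hatJ H a ∈ Lᗮ := by
      rw [← hL]; exact ⟨a, ha, rfl⟩
    have := hJa b hb
    rw [← inner_conj_symm, this, map_zero]
  have hJR : ∀ a b : Hh H, a ∈ L → b ∈ L → ⟪a, hatJ H b⟫_ℂ = 0 := by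
    intro a b ha hb
    rw [← neg_eq_zero, ← inner_hatJ_left, hJL _ _ ha hb]
  -- L is closed, hence complete
  have hLclosed : IsClosed (L : Set (Hh H)) := by
    have : L = (Lᗮ).comap (hatJ H).toLinearMap := by
      rw [← hL]
      exact (Submodule.comap_map_eq_of_injective (f := (hatJ H).toLinearMap)
        (hatJ_injective H) L).symm
    rw [this]
    exact (Submodule.isClosed_orthogonal L).preimage (hatJ H).continuous
  haveI : CompleteSpace ↥L := hLclosed.completeSpace_coe
  apply le_antisymm
  · -- J M ⊆ Mᗮ
    rintro x hx
    rw [Submodule.mem_map] at hx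
    obtain ⟨m, hm, rfl⟩ := hx
    rw [mem_graphJS] at hm
    obtain ⟨v, rfl⟩ := hm
    intro u hu
    rw [mem_graphJS] at hu
    obtain ⟨w, rfl⟩ := hu
    have expand : (hatJ H).toLinearMap ((v : Hh H) + hatJ H (S v : Hh H))
        = hatJ H (v : Hh H) - (S v : Hh H) := by
      simp [map_add, hatJ_hatJ, sub_eq_add_neg]
    rw [expand]
    rw [inner_add_left, inner_sub_right, inner_sub_right]
    rw [hJR _ _ w.2 v.2, hJL _ _ (S w).2 (S v).2, inner_hatJ_hatJ]
    have h1 : ⟪(w : Hh H), (S v : Hh H)⟫_ℂ = ⟪(S w : Hh H), (v : Hh H)⟫_ℂ := by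
      have := hS w v
      simpa [Submodule.coe_inner] using this.symm
    rw [h1]
    ring
  · -- Mᗮ ⊆ J M
    intro x hx
    obtain ⟨a, ha, c, hc, rfl⟩ := L.exists_add_mem_mem_orthogonal x
    rw [← hL, Submodule.mem_map] at hc
    obtain ⟨b, hb, rfl⟩ := hc
    -- show a + S b = 0
    set bb : ↥L := ⟨b, hb⟩
    set aa : ↥L := ⟨a, ha⟩
    have key : ∀ v : ↥L, ⟪(v : Hh H), (aa : Hh H) + (S bb : Hh H)⟫_ℂ = 0 := by
      intro v
      have hmem : (v : Hh H) + hatJ H (S v : Hh H) ∈ graphJS H L S :=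
        (mem_graphJS H L S _).2 ⟨v, rfl⟩
      have h0 := hx _ hmem
      simp only [ContinuousLinearMap.coe_coe] at h0
      rw [inner_add_left, inner_add_right, inner_add_right,
        hJR _ _ v.2 hb, hJL _ _ (S v).2 ha] at h0
      have h3 : ⟪hatJ H (S v : Hh H), hatJ H b⟫_ℂ = ⟪(v : Hh H), (S bb : Hh H)⟫_ℂ := by
        rw [inner_hatJ_hatJ]
        have := hS v bb
        simpa [Submodule.coe_inner] using this
      rw [inner_add_right, ← h3]
      linear_combination h0
    have hz : aa + S bb = 0 := by
      have := key (aa + S bb)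
      have h4 : ((aa + S bb : ↥L) : Hh H) = (aa : Hh H) + (S bb : Hh H) := rfl
      rw [h4] at this
      have : ⟪((aa + S bb : ↥L) : Hh H), ((aa + S bb : ↥L) : Hh H)⟫_ℂ = 0 := by
        rw [h4]; exact this
      have h5 := inner_self_eq_zero.mp this
      exact_mod_cast h5
    refine Submodule.mem_map.2 ⟨(bb : Hh H) + hatJ H (S bb : Hh H),
      (mem_graphJS H L S _).2 ⟨bb, rfl⟩, ?_⟩
    have haa : a = -(S bb : Hh H) := by
      have := congrArg (Submodule.subtype L) hz
      simpa [aa, eq_neg_iff_add_eq_zero] using this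
    simp only [ContinuousLinearMap.coe_coe, map_add, hatJ_hatJ]
    rw [haa]
    abel
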